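/- Let G be a simple graph with vertex set V, let C' ⊆ V, let v ∈ V \ C', and set C = C' ∪ {v}. Then for all a, b ∈ C', edist_{G[C]}(a,b) = min( edist_{G[C']}(a,b), edist_{G[C]}(a,v) + edist_{G[C]}(v,b) ), where all distances are taken in ℕ∞. -/
import Mathlib

lemma walk_avoid_aux {V : Type*} (G : SimpleGraph V) (C' : Set V) (v : V)
    (C : Set V) (hC : C = insert v C') :
    ∀ {x y : ↥C} (p : (G.induce C).Walk x y) (hnv : ∀ z ∈ p.support, (z : V) ≠ v)
      (hx : (x : V) ∈ C') (hy : (y : V) ∈ C'),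
      ∃ q : (G.induce C').Walk ⟨x, hx⟩ ⟨y, hy⟩, q.length = p.length := by
  intro x y p
  induction p with
  | nil => intro _ hx hy; exact ⟨SimpleGraph.Walk.nil, rfl⟩
  | @cons x w y h p ih =>
    intro hnv hx hy
    have hwC : (w : V) ∈ insert v C' := hC ▸ w.2
    have hwne : (w : V) ≠ v := hnv w (by simp [SimpleGraph.Walk.support_cons])
    have hw : (w : V) ∈ C' := by
      rcases hwC with h1 | h1
      · exact absurd h1 hwne
      · exact h1
    obtain ⟨q, hq⟩ := ih (fun z hz => hnv z (by simp [SimpleGraph.Walk.support_cons, hz])) hw hy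
    have h' : (G.induce C').Adj ⟨(x : V), hx⟩ ⟨(w : V), hw⟩ := by
      simp only [SimpleGraph.comap_adj, Function.Embedding.coe_subtype] at h ⊢
      exact h
    exact ⟨SimpleGraph.Walk.cons h' q, by simp [hq]⟩

/-- Introduce-bag distance update for pairs of old vertices: for `a, b ∈ C'`,
the distance in `G[C' ∪ {v}]` is the minimum of the old distance in `G[C']` and the
distance through the introduced vertex `v`. -/
theorem edist_update_introduced_vertex
    {V : Type*} (G : SimpleGraph V) (C' : Set V) (v : V) (hv : v ∉ C')
    (C : Set V) (hC : C = insert v C')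
    (a b : V) (ha : a ∈ C') (hb : b ∈ C')
    (ha' : a ∈ C) (hb' : b ∈ C) (hv' : v ∈ C) :
    (G.induce C).edist ⟨a, ha'⟩ ⟨b, hb'⟩ =
      min ((G.induce C').edist ⟨a, ha⟩ ⟨b, hb⟩)
        ((G.induce C).edist ⟨a, ha'⟩ ⟨v, hv'⟩ +
          (G.induce C).edist ⟨v, hv'⟩ ⟨b, hb'⟩) := by
  classical
  have hle : C' ⊆ C := by rw [hC]; exact Set.subset_insert v C'
  refine le_antisymm (le_min ?_ ?_) ?_
  · -- edist in C ≤ edist in C'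
    by_cases htop : (G.induce C').edist ⟨a, ha⟩ ⟨b, hb⟩ = ⊤
    · simp [htop]
    · obtain ⟨p, hp⟩ := SimpleGraph.exists_walk_of_edist_ne_top htop
      rw [← hp]
      calc (G.induce C).edist ⟨a, ha'⟩ ⟨b, hb'⟩
          ≤ (p.map (G.induceHomOfLE hle).toHom).length := SimpleGraph.edist_le _
        _ = p.length := by rw [SimpleGraph.Walk.length_map]
  · exact SimpleGraph.edist_triangle
  · by_cases htop : (G.induce C).edist ⟨a, ha'⟩ ⟨b, hb'⟩ = ⊤
    · simp [htop]
    · obtain ⟨p, hp⟩ := SimpleGraph.exists_walk_of_edist_ne_top htop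
      by_cases hvp : (⟨v, hv'⟩ : ↥C) ∈ p.support
      · refine min_le_of_right_le ?_
        rw [← hp, ← p.take_spec hvp, SimpleGraph.Walk.length_append]
        push_cast
        exact add_le_add (SimpleGraph.edist_le _) (SimpleGraph.edist_le _)
      · refine min_le_of_left_le ?_
        have hnv : ∀ z ∈ p.support, (z : V) ≠ v := by
          intro z hz hzv
          exact hvp (by rwa [show (⟨v, hv'⟩ : ↥C) = z from Subtype.ext hzv.symm])
        obtain ⟨q, hq⟩ := walk_avoid_aux G C' v C hC p hnv ha hb
        rw [← hp, ← hq]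
        exact SimpleGraph.edist_le q
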